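/- There is a universal constant C₀ ≥ 1 such that for every polygonal curve P of complexity at most k in ℝ^d, every Δ > 0, every λ > 0, every real c > 1 and every p ∈ ℝ^d, the set N_{Δ/c}(𝓛_{λ,(1+1/c)Δ}(P,p)) can be covered by at most k·(C₀·c)^d closed balls of radius Δ/c. -/

import Mathlib

open Set Metric Function

noncomputable section

/-- Euclidean space ℝ^d. -/
abbrev Euc (d : ℕ) := EuclideanSpace ℝ (Fin d)

/-- The polygonal curve (parametrized over `[0,1]`) obtained by concatenating the
segments between consecutive vertices `p 0, p 1, …, p n`. -/
def curveMap {d n : ℕ} (p : Fin (n + 1) → Euc d) (t : ℝ) : Euc d :=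
  if h : n = 0 then p 0
  else
    (1 - (t * n - (min ⌊t * (n : ℝ)⌋₊ (n - 1) : ℕ))) • p ⟨min ⌊t * (n : ℝ)⌋₊ (n - 1), by omega⟩
      + (t * n - (min ⌊t * (n : ℝ)⌋₊ (n - 1) : ℕ)) • p ⟨min ⌊t * (n : ℝ)⌋₊ (n - 1) + 1, by omega⟩

/-- A reparametrization: a continuous non-decreasing surjection of `[0,1]` onto itself. -/
def IsRepar (f : ℝ → ℝ) : Prop :=
  ContinuousOn f (Icc 0 1) ∧ MonotoneOn f (Icc 0 1) ∧ f '' Icc 0 1 = Icc 0 1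

/-- The (continuous) Fréchet distance between two curves `[0,1] → ℝ^d`. -/
def frechetDist {d : ℕ} (P Q : ℝ → Euc d) : ℝ :=
  sInf { r : ℝ | ∃ f g : ℝ → ℝ, IsRepar f ∧ IsRepar g ∧
    ∀ t ∈ Icc (0 : ℝ) 1, dist (P (f t)) (Q (g t)) ≤ r }

/-- The edge (segment curve) from `a` to `b`, parametrized over `[0,1]`. -/
def seg {d : ℕ} (a b : Euc d) (t : ℝ) : Euc d := (1 - t) • a + t • b

/-- The subcurve `P[s,t]` of `P`, reparametrized over `[0,1]`. -/
def subcurve {d : ℕ} (P : ℝ → Euc d) (s t : ℝ) (u : ℝ) : Euc d := P (s + u * (t - s))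

/-- All edge lengths of the polygonal curve with vertices `p` are at most `Λ`. -/
def EdgeLenLe {d n : ℕ} (p : Fin (n + 1) → Euc d) (Λ : ℝ) : Prop :=
  ∀ i : Fin n, dist (p i.castSucc) (p i.succ) ≤ Λ

/-- The vertices `p` define a `(μ,ε)`-curve: each edge length is a non-negative integer
multiple of `ε` and is at most `μ·ε`. -/
def IsMuEpsEdges {d n : ℕ} (p : Fin (n + 1) → Euc d) (μ : ℕ) (ε : ℝ) : Prop :=
  ∀ i : Fin n, (∃ m : ℕ, dist (p i.castSucc) (p i.succ) = m * ε) ∧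
    dist (p i.castSucc) (p i.succ) ≤ μ * ε

/-- The `Δ`-neighbourhood of a set `A ⊆ ℝ^d`. -/
def nbhd {d : ℕ} (A : Set (Euc d)) (Δ : ℝ) : Set (Euc d) :=
  { x | ∃ a ∈ A, dist x a ≤ Δ }

/-- The locus `L_{λ,Δ}(P,s)` of endpoints of edges of length `λ` that are within Fréchet
distance `Δ` of some subcurve of `P` starting at parameter `s`. -/
def locusStart {d n : ℕ} (P : Fin (n + 1) → Euc d) (lam Δ s : ℝ) : Set (Euc d) :=
  { q | ∃ p : Euc d, ∃ t ∈ Icc s 1, dist p q = lam ∧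
      frechetDist (subcurve (curveMap P) s t) (seg p q) ≤ Δ }

/-- The locus `𝓛_{λ,Δ}(P,p)` of endpoints of edges of length `λ` starting at `p` that are
within Fréchet distance `Δ` of some subcurve of `P`. -/
def locusPoint {d n : ℕ} (P : Fin (n + 1) → Euc d) (lam Δ : ℝ) (p : Euc d) : Set (Euc d) :=
  { q | dist p q = lam ∧ ∃ s t : ℝ, 0 ≤ s ∧ s ≤ t ∧ t ≤ 1 ∧
      frechetDist (subcurve (curveMap P) s t) (seg p q) ≤ Δ }

/-!
A point `q` of the locus ends an edge `pq` of length `λ` that is `D`-close, `D = 2Δ`, to a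
subcurve `P[s,t]`. If `λ ≤ 10D`, then `q` lies near `p`. Otherwise the point `w` of `pq` at distance
`8D` before `q` is matched to some point `P(y)`. Either a vertex of `P` lies in `P[y,t]`; it is
matched to a point of `wq`, so `q` is `9D`-close to it. Or `P[y,t]` runs along a single edge, so
`q` is `D`-close to the line of that edge and `q - p` points the same way as the edge. The points
of the sphere of radius `λ` about `p` that are near a line and aligned with it form a cap of
diameter `≤ 7D`. Hence the locus is covered by `2n + 2` sets of diameter `O(Δ)`, and a volume
argument covers the `Δ/c`-neighbourhood of each by `(O(c))^d` balls of radius `Δ/c`.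
-/

open scoped RealInnerProductSpace

namespace IsRepar

variable {f : ℝ → ℝ}

lemma mapsTo (hf : IsRepar f) : MapsTo f (Icc 0 1) (Icc 0 1) := by
  intro u hu
  rw [← hf.2.2]
  exact mem_image_of_mem f hu

lemma map_one (hf : IsRepar f) : f 1 = 1 := by
  have h1 : (1 : ℝ) ∈ Icc (0 : ℝ) 1 := right_mem_Icc.2 zero_le_one
  obtain ⟨u, hu, hfu⟩ : (1 : ℝ) ∈ f '' Icc 0 1 := by rw [hf.2.2]; exact h1
  exact le_antisymm (hf.mapsTo h1).2 (hfu.symm.le.trans (hf.2.1 hu h1 hu.2))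

lemma exists_mem_Icc_eq (hf : IsRepar f) {a : ℝ} (ha : a ∈ Icc (0 : ℝ) 1) :
    ∃ u ∈ Icc (0 : ℝ) 1, f u = a := by
  rwa [← hf.2.2] at ha

lemma exists_ge_eq (hf : IsRepar f) {u₀ a : ℝ} (hu₀ : u₀ ∈ Icc (0 : ℝ) 1)
    (ha : a ∈ Icc (f u₀) 1) : ∃ u ∈ Icc u₀ 1, f u = a := by
  rw [← hf.map_one] at ha
  exact intermediate_value_Icc hu₀.2 (hf.1.mono (Icc_subset_Icc_left hu₀.1)) ha

lemma exists_ge_affine_eq (hf : IsRepar f) {s t r τ₀ : ℝ}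
    (hτ₀ : τ₀ ∈ Icc (0 : ℝ) 1) (hst : s ≤ t) (hr : r ∈ Icc (s + f τ₀ * (t - s)) t) :
    ∃ τ ∈ Icc τ₀ 1, s + f τ * (t - s) = r := by
  rcases hst.eq_or_lt with rfl | hlt
  · refine ⟨τ₀, left_mem_Icc.2 hτ₀.2, ?_⟩
    simp only [sub_self, mul_zero, add_zero] at hr ⊢
    exact le_antisymm hr.1 hr.2
  obtain ⟨τ, hτ, hfτ⟩ := hf.exists_ge_eq hτ₀ (a := (r - s) / (t - s))
    ⟨(le_div_iff₀ (sub_pos.2 hlt)).2 (by linarith [hr.1]),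
      (div_le_one (sub_pos.2 hlt)).2 (by linarith [hr.2])⟩
  exact ⟨τ, hτ, by rw [hfτ]; field_simp; ring⟩

end IsRepar

lemma isRepar_id : IsRepar id :=
  ⟨continuousOn_id, monotoneOn_id, image_id _⟩

lemma exists_isRepar_forall_dist_le_of_frechetDist_lt {d : ℕ} {P Q : ℝ → Euc d}
    (hP : Bornology.IsBounded (P '' Icc 0 1)) (hQ : Bornology.IsBounded (Q '' Icc 0 1))
    {D : ℝ} (h : frechetDist P Q < D) :
    ∃ f g : ℝ → ℝ, IsRepar f ∧ IsRepar g ∧ ∀ τ ∈ Icc (0 : ℝ) 1, dist (P (f τ)) (Q (g τ)) ≤ D := by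
  obtain ⟨C, hC⟩ := isBounded_iff.1 (hP.union hQ)
  have hne : ∃ r, r ∈ { r : ℝ | ∃ f g : ℝ → ℝ, IsRepar f ∧ IsRepar g ∧
      ∀ τ ∈ Icc (0 : ℝ) 1, dist (P (f τ)) (Q (g τ)) ≤ r } :=
    ⟨C, id, id, isRepar_id, isRepar_id, fun τ hτ =>
      hC (.inl (mem_image_of_mem P hτ)) (.inr (mem_image_of_mem Q hτ))⟩
  obtain ⟨r, ⟨f, g, hf, hg, hfg⟩, hrD⟩ := exists_lt_of_csInf_lt hne h
  exact ⟨f, g, hf, hg, fun τ hτ => (hfg τ hτ).trans hrD.le⟩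

lemma seg_eq_lineMap {d : ℕ} (a b : Euc d) : seg a b = AffineMap.lineMap a b :=
  funext fun u => (AffineMap.lineMap_apply_module a b u).symm

lemma isBounded_image_seg {d : ℕ} (p q : Euc d) : Bornology.IsBounded (seg p q '' Icc 0 1) :=
  (isCompact_Icc.image (by unfold seg; fun_prop)).isBounded

section PolygonalCurve

variable {d n : ℕ}

def edgeIndex (hn : n ≠ 0) (x : ℝ) : Fin n := ⟨min ⌊x * n⌋₊ (n - 1), by omega⟩

lemma edgeIndex_mono (hn : n ≠ 0) : Monotone (edgeIndex hn) := fun _ _ hxy =>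
  Fin.mk_le_mk.2 <| min_le_min_right _ <| Nat.floor_mono <|
    mul_le_mul_of_nonneg_right hxy n.cast_nonneg

lemma edgeIndex_le_mul (hn : n ≠ 0) {x : ℝ} (hx : 0 ≤ x) : (edgeIndex hn x : ℝ) ≤ x * n :=
  (Nat.cast_le.2 (min_le_left _ _)).trans (Nat.floor_le (by positivity))

lemma mul_sub_edgeIndex_mem_Icc (hn : n ≠ 0) {x : ℝ} (hx : x ∈ Icc (0 : ℝ) 1) :
    x * n - edgeIndex hn x ∈ Icc (0 : ℝ) 1 := by
  refine ⟨sub_nonneg.2 (edgeIndex_le_mul hn hx.1), ?_⟩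
  rcases le_total ⌊x * n⌋₊ (n - 1) with h | h
  · have : (edgeIndex hn x : ℕ) = ⌊x * n⌋₊ := min_eq_left h
    rw [this]
    linarith [Nat.lt_floor_add_one (x * n)]
  · have : (edgeIndex hn x : ℕ) = n - 1 := min_eq_right h
    rw [this, Nat.cast_sub (Nat.one_le_iff_ne_zero.2 hn), Nat.cast_one]
    nlinarith [hx.2, (n.cast_nonneg : (0 : ℝ) ≤ n)]

lemma curveMap_eq_of_ne_zero (P : Fin (n + 1) → Euc d) (hn : n ≠ 0) (x : ℝ) :
    curveMap P x = (1 - (x * n - edgeIndex hn x)) • P (edgeIndex hn x).castSucc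
      + (x * n - edgeIndex hn x) • P (edgeIndex hn x).succ := by
  rw [curveMap, dif_neg hn]
  rfl

lemma curveMap_natCast_div (P : Fin (n + 1) → Euc d) (hn : n ≠ 0) (i : Fin n) :
    curveMap P (i / n) = P i.castSucc := by
  have hx : (i / n : ℝ) * n = i := div_mul_cancel₀ _ (Nat.cast_ne_zero.2 hn)
  have hi : edgeIndex hn (i / n) = i := by
    ext
    simp only [edgeIndex, hx, Nat.floor_natCast]
    omega
  rw [curveMap_eq_of_ne_zero P hn, hi, hx, sub_self, sub_zero, one_smul, zero_smul, add_zero]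

lemma curveMap_mem_convexHull (P : Fin (n + 1) → Euc d) {x : ℝ} (hx : x ∈ Icc (0 : ℝ) 1) :
    curveMap P x ∈ convexHull ℝ (range P) := by
  by_cases hn : n = 0
  · rw [curveMap, dif_pos hn]
    exact subset_convexHull ℝ _ (mem_range_self 0)
  · obtain ⟨h0, h1⟩ := mul_sub_edgeIndex_mem_Icc hn hx
    rw [curveMap_eq_of_ne_zero P hn]
    exact convex_convexHull ℝ _ (subset_convexHull ℝ _ (mem_range_self _))
      (subset_convexHull ℝ _ (mem_range_self _)) (sub_nonneg.2 h1) h0 (sub_add_cancel _ _)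

lemma isBounded_image_subcurve_curveMap (P : Fin (n + 1) → Euc d) {s t : ℝ} (hs : 0 ≤ s)
    (hst : s ≤ t) (ht : t ≤ 1) : Bornology.IsBounded (subcurve (curveMap P) s t '' Icc 0 1) := by
  refine ((finite_range P).isCompact_convexHull (𝕜 := ℝ)).isBounded.subset ?_
  rintro _ ⟨u, hu, rfl⟩
  exact curveMap_mem_convexHull P ⟨by nlinarith [hu.1], by nlinarith [hu.2]⟩

lemma curveMap_eq_add_smul (P : Fin (n + 1) → Euc d) (hn : n ≠ 0) (x : ℝ) :
    curveMap P x = P (edgeIndex hn x).castSucc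
      + (x * n - edgeIndex hn x) • (P (edgeIndex hn x).succ - P (edgeIndex hn x).castSucc) := by
  rw [curveMap_eq_of_ne_zero P hn]
  module

lemma exists_vertex_mem_Icc_or_sameEdge (P : Fin (n + 1) → Euc d) (hn : n ≠ 0) {y t : ℝ}
    (hy : 0 ≤ y) (hyt : y ≤ t) :
    (∃ i : Fin n, (i / n : ℝ) ∈ Icc y t) ∨
    ∃ i : Fin n, ∃ β₁ β₂ : ℝ, β₁ ≤ β₂ ∧
      curveMap P y = P i.castSucc + β₁ • (P i.succ - P i.castSucc) ∧
      curveMap P t = P i.castSucc + β₂ • (P i.succ - P i.castSucc) := by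
  have hn' : (0 : ℝ) < n := Nat.cast_pos.2 (Nat.pos_of_ne_zero hn)
  rcases (edgeIndex_mono hn hyt).lt_or_eq with hlt | heq
  · refine .inl ⟨edgeIndex hn t, ?_, ?_⟩
    · have hlt' : (edgeIndex hn y : ℕ) < n - 1 := (Fin.lt_def.1 hlt).trans_le (min_le_right _ _)
      have hfloor : (edgeIndex hn y : ℕ) = ⌊y * n⌋₊ := by
        have : (edgeIndex hn y : ℕ) = min ⌊y * n⌋₊ (n - 1) := rfl
        omega
      have hnext : (⌊y * n⌋₊ : ℝ) + 1 ≤ edgeIndex hn t := by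
        rw [← hfloor]; exact_mod_cast hlt
      rw [le_div_iff₀ hn']
      linarith [Nat.lt_floor_add_one (y * n)]
    · exact (div_le_iff₀ hn').2 (edgeIndex_le_mul hn (hy.trans hyt))
  · refine .inr ⟨edgeIndex hn t, y * n - edgeIndex hn y, t * n - edgeIndex hn t, ?_,
      heq ▸ curveMap_eq_add_smul P hn y, curveMap_eq_add_smul P hn t⟩
    rw [heq]
    gcongr

end PolygonalCurve

section InnerProductGeometry

variable {E : Type*} [NormedAddCommGroup E] [InnerProductSpace ℝ E]

lemma le_inner_of_norm_smul_sub_le {u v : E} {γ δ : ℝ} (hγ : 0 ≤ γ) (h : ‖γ • v - u‖ ≤ δ) :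
    (‖u‖ - 2 * δ) * ‖v‖ ≤ ⟪u, v⟫ := by
  have hγv : ⟪γ • v, v⟫ = ‖γ • v‖ * ‖v‖ := by
    rw [real_inner_smul_left, real_inner_self_eq_norm_sq, norm_smul, Real.norm_of_nonneg hγ]
    ring
  have herr : ⟪γ • v - u, v⟫ ≤ δ * ‖v‖ :=
    (real_inner_le_norm _ _).trans (mul_le_mul_of_nonneg_right h (norm_nonneg v))
  have hnorm : ‖u‖ - δ ≤ ‖γ • v‖ := by
    linarith [norm_sub_norm_le u (γ • v), norm_sub_rev (γ • v) u]
  have : ⟪u, v⟫ = ⟪γ • v, v⟫ - ⟪γ • v - u, v⟫ := by rw [inner_sub_left]; ring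
  nlinarith [norm_nonneg v]

lemma two_mul_mul_norm_sub_le {p v x₁ x₂ : E} {γ m : ℝ} (hx : x₁ - x₂ = γ • v)
    (h₁ : m * ‖v‖ ≤ ⟪x₁ - p, v⟫) (h₂ : m * ‖v‖ ≤ ⟪x₂ - p, v⟫) :
    2 * m * ‖x₁ - x₂‖ ≤ |‖x₁ - p‖ ^ 2 - ‖x₂ - p‖ ^ 2| := by
  have hsplit : x₁ - p = (x₂ - p) + γ • v := by rw [← hx]; abel
  have hdiff : ‖x₁ - p‖ ^ 2 - ‖x₂ - p‖ ^ 2 = γ * (⟪x₁ - p, v⟫ + ⟪x₂ - p, v⟫) := by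
    rw [hsplit, norm_add_sq_real, inner_add_left, real_inner_smul_left, real_inner_smul_right,
      norm_smul, mul_pow, Real.norm_eq_abs, sq_abs, real_inner_self_eq_norm_sq]
    ring
  rw [hdiff, abs_mul, hx, norm_smul, Real.norm_eq_abs]
  calc 2 * m * (|γ| * ‖v‖) = |γ| * (m * ‖v‖ + m * ‖v‖) := by ring
    _ ≤ |γ| * |⟪x₁ - p, v⟫ + ⟪x₂ - p, v⟫| :=
      mul_le_mul_of_nonneg_left ((add_le_add h₁ h₂).trans (le_abs_self _)) (abs_nonneg γ)

lemma dist_le_of_dist_line_le {p a v q₁ q₂ : E} {lam D β₁ β₂ : ℝ} (hlam : 10 * D < lam)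
    (hq₁ : dist p q₁ = lam) (hq₂ : dist p q₂ = lam)
    (hl₁ : dist q₁ (a + β₁ • v) ≤ D) (hl₂ : dist q₂ (a + β₂ • v) ≤ D)
    (hv₁ : lam / 2 * ‖v‖ ≤ ⟪q₁ - p, v⟫) (hv₂ : lam / 2 * ‖v‖ ≤ ⟪q₂ - p, v⟫) :
    dist q₁ q₂ ≤ 7 * D := by
  have hD : 0 ≤ D := dist_nonneg.trans hl₁
  have key : ∀ {q : E} {β : ℝ}, dist p q = lam → dist q (a + β • v) ≤ D →
      lam / 2 * ‖v‖ ≤ ⟪q - p, v⟫ → |‖a + β • v - p‖ - lam| ≤ D ∧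
        (lam / 2 - D) * ‖v‖ ≤ ⟪a + β • v - p, v⟫ := by
    intro q β hq hl hv
    rw [dist_comm, dist_eq_norm] at hq
    rw [dist_eq_norm] at hl
    refine ⟨?_, ?_⟩
    · rw [← hq]
      exact (abs_norm_sub_norm_le _ _).trans (by rwa [sub_sub_sub_cancel_right, norm_sub_rev])
    · have hin : -(D * ‖v‖) ≤ ⟪a + β • v - q, v⟫ := by
        rw [neg_le]
        calc -⟪a + β • v - q, v⟫ = ⟪q - (a + β • v), v⟫ := by rw [← inner_neg_left, neg_sub]
          _ ≤ D * ‖v‖ :=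
            (real_inner_le_norm _ _).trans (mul_le_mul_of_nonneg_right hl (norm_nonneg v))
      have : ⟪a + β • v - p, v⟫ = ⟪q - p, v⟫ + ⟪a + β • v - q, v⟫ := by
        rw [← inner_add_left, sub_add_sub_cancel']
      nlinarith
  obtain ⟨hn₁, hi₁⟩ := key hq₁ hl₁ hv₁
  obtain ⟨hn₂, hi₂⟩ := key hq₂ hl₂ hv₂
  have hchord := two_mul_mul_norm_sub_le (p := p) (show a + β₁ • v - (a + β₂ • v) = (β₁ - β₂) • v
    by module) hi₁ hi₂
  have hsq : |‖a + β₁ • v - p‖ ^ 2 - ‖a + β₂ • v - p‖ ^ 2| ≤ 4 * lam * D := by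
    rw [abs_le] at hn₁ hn₂ ⊢
    constructor <;> nlinarith
  have hline : dist (a + β₁ • v) (a + β₂ • v) ≤ 5 * D := by
    rw [dist_eq_norm]
    by_contra! hlong
    nlinarith [mul_pos (by linarith : 0 < lam - 2 * D) (sub_pos.2 hlong),
      mul_nonneg hD (by linarith : 0 ≤ lam - 10 * D)]
  calc dist q₁ q₂
        ≤ dist q₁ (a + β₁ • v) + dist (a + β₁ • v) (a + β₂ • v) + dist (a + β₂ • v) q₂ :=
        dist_triangle4 _ _ _ _
    _ ≤ D + 5 * D + D := by gcongr; rwa [dist_comm]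
    _ = 7 * D := by ring

lemma dist_lineMap_right_le {p q : E} {r u : ℝ} (hu : u ∈ Icc (1 - r) 1) :
    dist (AffineMap.lineMap p q u) q ≤ r * dist p q := by
  rw [dist_lineMap_right, Real.norm_of_nonneg (sub_nonneg.2 hu.2)]
  gcongr
  linarith [hu.1]

lemma le_inner_of_dist_endpoints_le {p q x z v : E} {γ lam D : ℝ} (hγ : 0 ≤ γ)
    (hxz : x - z = γ • v) (hpq : dist p q = lam) (hlam : 0 < lam) (hD : 0 < D) (hx : dist x q ≤ D)
    (hz : dist z (AffineMap.lineMap q p (8 * D / lam)) ≤ D) :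
    lam / 2 * ‖v‖ ≤ ⟪q - p, v⟫ := by
  set r := 8 * D / lam
  have hqw : q - AffineMap.lineMap q p r = r • (q - p) := by
    rw [AffineMap.lineMap_apply_module']; module
  have hnorm : ‖r • (q - p)‖ = 8 * D := by
    rw [norm_smul, Real.norm_of_nonneg (by positivity), ← dist_eq_norm, dist_comm, hpq]
    simp only [r]
    field_simp
  have hclose : ‖γ • v - r • (q - p)‖ ≤ 2 * D := by
    rw [← hxz, ← hqw]
    calc ‖x - z - (q - AffineMap.lineMap q p r)‖
        = ‖(x - q) + (AffineMap.lineMap q p r - z)‖ := by congr 1; abel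
      _ ≤ D + D := (norm_add_le _ _).trans <| add_le_add (by rwa [← dist_eq_norm])
          (by rwa [← dist_eq_norm, dist_comm])
      _ = 2 * D := by ring
  have h := le_inner_of_norm_smul_sub_le hγ hclose
  rw [hnorm, real_inner_smul_left] at h
  refine le_of_mul_le_mul_left ?_ (show 0 < r by positivity)
  calc r * (lam / 2 * ‖v‖) = (8 * D - 2 * (2 * D)) * ‖v‖ := by simp only [r]; field_simp; ring
    _ ≤ r * ⟪q - p, v⟫ := h

end InnerProductGeometry

open MeasureTheory Module ENNReal in
lemma card_le_of_pairwise_lt_dist {E : Type*} [NormedAddCommGroup E] [NormedSpace ℝ E]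
    [FiniteDimensional ℝ E] (S : Finset E) {ρ R : ℝ} (hρ : 0 < ρ) (hR : 0 ≤ R)
    (hsep : (S : Set E).Pairwise (ρ < dist · ·)) (hdiam : ∀ x ∈ S, ∀ y ∈ S, dist x y ≤ R) :
    (S.card : ℝ) ≤ (2 * R / ρ + 1) ^ finrank ℝ E := by
  rcases S.eq_empty_or_nonempty with rfl | ⟨x₀, hx₀⟩
  · simp only [Finset.card_empty, Nat.cast_zero]
    positivity
  borelize E
  let μ : Measure E := Measure.addHaar
  have hdisj : (S : Set E).Pairwise (Disjoint on fun x => closedBall x (ρ / 2)) :=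
    fun x hx y hy hxy => closedBall_disjoint_closedBall (by linarith [hsep hx hy hxy])
  have hvol : (S.card : ℝ≥0∞) * ENNReal.ofReal ((ρ / 2) ^ finrank ℝ E) * μ (closedBall 0 1) ≤
      ENNReal.ofReal ((R + ρ / 2) ^ finrank ℝ E) * μ (closedBall 0 1) := by
    calc (S.card : ℝ≥0∞) * ENNReal.ofReal ((ρ / 2) ^ finrank ℝ E) * μ (closedBall 0 1)
        = μ (⋃ x ∈ S, closedBall x (ρ / 2)) := by
          rw [measure_biUnion_finset hdisj fun x _ => measurableSet_closedBall]
          simp only [μ.addHaar_closedBall' _ (by positivity : 0 ≤ ρ / 2), Finset.sum_const,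
            nsmul_eq_mul, mul_assoc]
      _ ≤ μ (closedBall x₀ (R + ρ / 2)) :=
          measure_mono <| iUnion₂_subset fun x hx =>
            closedBall_subset_closedBall' (by linarith [hdiam x hx x₀ hx₀])
      _ = ENNReal.ofReal ((R + ρ / 2) ^ finrank ℝ E) * μ (closedBall 0 1) :=
          μ.addHaar_closedBall' _ (by positivity)
  rw [ENNReal.mul_le_mul_iff_left (measure_closedBall_pos μ _ one_pos).ne'
    measure_closedBall_lt_top.ne, ← ENNReal.ofReal_natCast,
    ← ENNReal.ofReal_mul (by positivity), ENNReal.ofReal_le_ofReal_iff (by positivity),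
    ← le_div_iff₀ (by positivity), ← div_pow] at hvol
  refine hvol.trans_eq (congrArg (· ^ _) ?_)
  field_simp

lemma exists_finset_card_le_subset_iUnion_closedBall {X : Type*} [PseudoMetricSpace X]
    {A : Set X} {ρ : ℝ} {N : ℕ} (hρ : 0 ≤ ρ)
    (h : ∀ S : Finset X, ↑S ⊆ A → (S : Set X).Pairwise (ρ < dist · ·) → S.card ≤ N) :
    ∃ F : Finset X, F.card ≤ N ∧ A ⊆ ⋃ x ∈ F, closedBall x ρ := by
  lift ρ to NNReal using hρ
  have hpack : packingNumber ρ A ≤ N := by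
    simp only [packingNumber, iSup_le_iff]
    intro C hCA hC
    by_contra! hlt
    obtain ⟨S, hSC, hS⟩ := exists_subset_encard_eq (Order.add_one_le_of_lt hlt)
    have hSfin : S.Finite := finite_of_encard_eq_coe hS
    have hcard := h hSfin.toFinset (by simpa using hSC.trans hCA) fun x hx y hy hxy => by
      simpa [edist_dist] using hC (hSC (by simpa using hx)) (hSC (by simpa using hy)) hxy
    have := hSfin.encard_eq_coe_toFinset_card ▸ hS
    norm_cast at this
    omega
  have hcov := (coveringNumber_le_packingNumber ρ A).trans hpack
  obtain ⟨C, -, hCfin, hCcov, hCcard⟩ :=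
    exists_set_encard_eq_coveringNumber (hcov.trans_lt (ENat.natCast_lt_top N)).ne
  refine ⟨hCfin.toFinset, ?_, ?_⟩
  · rw [hCfin.encard_eq_coe_toFinset_card] at hCcard
    exact_mod_cast hCcard ▸ hcov
  · simpa using isCover_iff_subset_iUnion_closedBall.1 hCcov

lemma exists_finset_card_le_subset_iUnion_closedBall_of_subset_iUnion {E : Type*}
    [NormedAddCommGroup E] [NormedSpace ℝ E] [FiniteDimensional ℝ E] {ι : Type*} [Fintype ι]
    {A : Set E} {B : ι → Set E} {ρ R : ℝ} (hρ : 0 < ρ) (hR : 0 ≤ R) (hA : A ⊆ ⋃ i, B i)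
    (hB : ∀ i, ∀ x ∈ B i, ∀ y ∈ B i, dist x y ≤ R) :
    ∃ F : Finset E, (F.card : ℝ) ≤ Fintype.card ι * (2 * R / ρ + 1) ^ Module.finrank ℝ E ∧
      A ⊆ ⋃ x ∈ F, closedBall x ρ := by
  classical
  obtain ⟨F, hF, hAF⟩ := exists_finset_card_le_subset_iUnion_closedBall (A := A) hρ.le
    (N := ⌊Fintype.card ι * (2 * R / ρ + 1) ^ Module.finrank ℝ E⌋₊) fun S hSA hS => by
      refine Nat.le_floor ?_
      have hcover : S ⊆ Finset.univ.biUnion fun i => S.filter (· ∈ B i) := fun x hx => by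
        obtain ⟨i, hi⟩ := mem_iUnion.1 (hA (hSA hx))
        exact Finset.mem_biUnion.2 ⟨i, Finset.mem_univ i, Finset.mem_filter.2 ⟨hx, hi⟩⟩
      calc (S.card : ℝ) ≤ ∑ i, ((S.filter (· ∈ B i)).card : ℝ) := by
            exact_mod_cast (Finset.card_le_card hcover).trans Finset.card_biUnion_le
        _ ≤ ∑ _i : ι, (2 * R / ρ + 1) ^ Module.finrank ℝ E := by
            refine Finset.sum_le_sum fun i _ => card_le_of_pairwise_lt_dist _ hρ hR
              (hS.mono (Finset.coe_subset.2 (Finset.filter_subset _ _))) fun x hx y hy => ?_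
            exact hB i x (Finset.mem_filter.1 hx).2 y (Finset.mem_filter.1 hy).2
        _ = _ := by simp
  exact ⟨F, (Nat.cast_le.2 hF).trans (Nat.floor_le (by positivity)), hAF⟩

section Neighbourhood

variable {d : ℕ}

lemma nbhd_subset_iUnion_nbhd {ι : Type*} {A : Set (Euc d)} {B : ι → Set (Euc d)}
    (h : A ⊆ ⋃ i, B i) (ρ : ℝ) : nbhd A ρ ⊆ ⋃ i, nbhd (B i) ρ := by
  rintro x ⟨a, ha, hxa⟩
  obtain ⟨i, hi⟩ := mem_iUnion.1 (h ha)
  exact mem_iUnion.2 ⟨i, a, hi, hxa⟩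

lemma dist_le_of_mem_nbhd {B : Set (Euc d)} {R ρ : ℝ} (hB : ∀ x ∈ B, ∀ y ∈ B, dist x y ≤ R) :
    ∀ x ∈ nbhd B ρ, ∀ y ∈ nbhd B ρ, dist x y ≤ R + 2 * ρ := by
  rintro x ⟨a, ha, hxa⟩ y ⟨b, hb, hyb⟩
  linarith [dist_triangle4 x a b y, hB a ha b hb, dist_comm y b]

end Neighbourhood

section Locus

variable {d n : ℕ}

def locusPiece (P : Fin (n + 1) → Euc d) (p : Euc d) (lam D : ℝ) :
    Option (Fin (n + 1) ⊕ Fin n) → Set (Euc d)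
  | none => closedBall p (10 * D)
  | some (.inl j) => closedBall (P j) (9 * D)
  | some (.inr i) => {q | dist p q = lam ∧ 10 * D < lam ∧
      (∃ β : ℝ, dist q (P i.castSucc + β • (P i.succ - P i.castSucc)) ≤ D) ∧
      lam / 2 * ‖P i.succ - P i.castSucc‖ ≤ ⟪q - p, P i.succ - P i.castSucc⟫}

lemma dist_le_of_mem_locusPiece (P : Fin (n + 1) → Euc d) (p : Euc d) (lam D : ℝ) (hD : 0 ≤ D) :
    ∀ i, ∀ q₁ ∈ locusPiece P p lam D i, ∀ q₂ ∈ locusPiece P p lam D i, dist q₁ q₂ ≤ 20 * D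
  | none, q₁, h₁, q₂, h₂ => by
    linarith [dist_triangle_right q₁ q₂ p, mem_closedBall.1 h₁, mem_closedBall.1 h₂]
  | some (.inl j), q₁, h₁, q₂, h₂ => by
    linarith [dist_triangle_right q₁ q₂ (P j), mem_closedBall.1 h₁, mem_closedBall.1 h₂]
  | some (.inr i), q₁, ⟨hq₁, hlam, ⟨β₁, hl₁⟩, hv₁⟩, q₂, ⟨hq₂, _, ⟨β₂, hl₂⟩, hv₂⟩ => by
    linarith [dist_le_of_dist_line_le hlam hq₁ hq₂ hl₁ hl₂ hv₁ hv₂]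

lemma exists_mem_locusPiece_of_forall_dist_le (P : Fin (n + 1) → Euc d) {p q : Euc d}
    {lam D s t : ℝ} {f g : ℝ → ℝ} (hpq : dist p q = lam) (hD : 0 < D) (hlong : 10 * D < lam)
    (hs : 0 ≤ s) (hst : s ≤ t) (hf : IsRepar f) (hg : IsRepar g)
    (hm : ∀ τ ∈ Icc (0 : ℝ) 1,
      dist (curveMap P (s + f τ * (t - s))) (AffineMap.lineMap p q (g τ)) ≤ D) :
    ∃ i, q ∈ locusPiece P p lam D i := by
  have hlam : 0 < lam := by linarith
  have hend : dist (curveMap P t) q ≤ D := by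
    simpa [hf.map_one, hg.map_one] using hm 1 (right_mem_Icc.2 zero_le_one)
  by_cases hn : n = 0
  · refine ⟨some (.inl 0), mem_closedBall.2 ?_⟩
    rw [curveMap, dif_pos hn, dist_comm] at hend
    linarith
  set r := 8 * D / lam
  have hr : r ∈ Icc (0 : ℝ) 1 := ⟨by positivity, (div_le_one hlam).2 (by linarith)⟩
  obtain ⟨τ₀, hτ₀, hgτ₀⟩ :=
    hg.exists_mem_Icc_eq (a := 1 - r) ⟨by linarith [hr.2], by linarith [hr.1]⟩
  have hy : dist (curveMap P (s + f τ₀ * (t - s))) (AffineMap.lineMap q p r) ≤ D := by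
    simpa [hgτ₀, AffineMap.lineMap_apply_one_sub] using hm τ₀ hτ₀
  have hy0 : 0 ≤ s + f τ₀ * (t - s) := by nlinarith [(hf.mapsTo hτ₀).1]
  have hyt : s + f τ₀ * (t - s) ≤ t := by nlinarith [(hf.mapsTo hτ₀).2]
  rcases exists_vertex_mem_Icc_or_sameEdge P hn hy0 hyt with ⟨i, hi⟩ | ⟨i, β₁, β₂, hβ, hyi, hti⟩
  · obtain ⟨τ, hτ, hfτ⟩ := hf.exists_ge_affine_eq hτ₀ hst hi
    have hτ' : τ ∈ Icc (0 : ℝ) 1 := ⟨hτ₀.1.trans hτ.1, hτ.2⟩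
    have hgτ : 1 - r ≤ g τ := hgτ₀ ▸ hg.2.1 hτ₀ hτ' hτ.1
    have hvertex := hm τ hτ'
    rw [hfτ, curveMap_natCast_div P hn] at hvertex
    have hsegq : dist (AffineMap.lineMap p q (g τ)) q ≤ 8 * D := by
      refine (dist_lineMap_right_le ⟨hgτ, (hg.mapsTo hτ').2⟩).trans_eq ?_
      rw [hpq]
      simp only [r]
      field_simp
    refine ⟨some (.inl i.castSucc), mem_closedBall.2 ?_⟩
    linarith [dist_triangle_right q (P i.castSucc) (AffineMap.lineMap p q (g τ)),
      dist_comm q (AffineMap.lineMap p q (g τ))]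
  · refine ⟨some (.inr i), hpq, hlong, ⟨β₂, by rwa [dist_comm, ← hti]⟩,
      le_inner_of_dist_endpoints_le (sub_nonneg.2 hβ) ?_ hpq hlam hD hend (hyi ▸ hy)⟩
    rw [hti]
    module

lemma locusPoint_subset_iUnion_locusPiece (P : Fin (n + 1) → Euc d) (p : Euc d) {lam D' D : ℝ}
    (hD : 0 < D) (hD' : D' < D) : locusPoint P lam D' p ⊆ ⋃ i, locusPiece P p lam D i := by
  rintro q ⟨hpq, s, t, hs, hst, ht, hF⟩
  rw [mem_iUnion]
  by_cases hshort : lam ≤ 10 * D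
  · exact ⟨none, by rwa [locusPiece, mem_closedBall, dist_comm, hpq]⟩
  obtain ⟨f, g, hf, hg, hm⟩ := exists_isRepar_forall_dist_le_of_frechetDist_lt
    (isBounded_image_subcurve_curveMap P hs hst ht) (isBounded_image_seg p q) (hF.trans_lt hD')
  simp only [subcurve, seg_eq_lineMap] at hm
  exact exists_mem_locusPiece_of_forall_dist_le P hpq hD (not_le.1 hshort) hs hst hf hg hm

end Locus

/-- Corollary 3.10 of the paper. There is a universal constant `C₀ ≥ 1`
such that the `Δ/c`-neighbourhood of `𝓛_{λ,(1+1/c)Δ}(P,p)` can be covered by at most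
`k·(C₀·c)^d` closed balls of radius `Δ/c`. -/
theorem nbhd_locusPoint_cover :
    ∃ C₀ : ℝ, 1 ≤ C₀ ∧
      ∀ (d k n : ℕ), n + 1 ≤ k →
      ∀ (P : Fin (n + 1) → Euc d) (Δ lam c : ℝ), 0 < Δ → 0 < lam → 1 < c →
      ∀ p : Euc d, ∃ F : Finset (Euc d), (F.card : ℝ) ≤ k * (C₀ * c) ^ d ∧
        nbhd (locusPoint P lam ((1 + 1 / c) * Δ) p) (Δ / c) ⊆
          ⋃ x ∈ F, closedBall x (Δ / c) := by
  refine ⟨170, by norm_num, fun d k n hk P Δ lam c hΔ _ hc p => ?_⟩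
  have hρ : 0 < Δ / c := by positivity
  rcases Nat.eq_zero_or_pos d with rfl | hd
  · refine ⟨{0}, ?_, fun x _ => ?_⟩
    · simpa using (Nat.one_le_cast.2 (by omega) : (1 : ℝ) ≤ k)
    · simpa [Subsingleton.elim x 0] using hρ.le
  have hD' : (1 + 1 / c) * Δ < 2 * Δ := by
    have : 1 / c < 1 := (div_lt_one (by linarith)).2 hc
    nlinarith
  obtain ⟨F, hF, hcover⟩ := exists_finset_card_le_subset_iUnion_closedBall_of_subset_iUnion hρ
    (by positivity) (nbhd_subset_iUnion_nbhd
      (locusPoint_subset_iUnion_locusPiece P p (by positivity) hD') (Δ / c))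
    fun i => dist_le_of_mem_nbhd (dist_le_of_mem_locusPiece P p lam (2 * Δ) (by positivity) i)
  refine ⟨F, hF.trans ?_, hcover⟩
  have hcard : (Fintype.card (Option (Fin (n + 1) ⊕ Fin n)) : ℝ) ≤ 2 * k := by
    simp only [Fintype.card_option, Fintype.card_sum, Fintype.card_fin]
    exact_mod_cast (by omega : n + 1 + n + 1 ≤ 2 * k)
  have hratio : 2 * (20 * (2 * Δ) + 2 * (Δ / c)) / (Δ / c) + 1 ≤ 85 * c := by
    rw [div_add_one hρ.ne', div_le_iff₀ hρ]
    field_simp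
    nlinarith
  rw [finrank_euclideanSpace_fin]
  calc _ ≤ 2 * k * (85 * c) ^ d := by gcongr
    _ ≤ 2 ^ d * k * (85 * c) ^ d := by
        gcongr; exact le_self_pow₀ one_le_two hd.ne'
    _ = k * (170 * c) ^ d := by
        rw [show (170 : ℝ) * c = 2 * (85 * c) by ring, mul_pow 2]; ring
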